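/- arXiv:2503.21264 — 2 statements merged into one kernel-verified Lean document; each statement's English description precedes it below -/
import Mathlib

section
/- If Γ < α is provable in the calculus G (with Amalgamation, without ∗ rules), then there exist finitely many grounding bars G₁,…,Gₘ for α with Γ = G₁ ∪ … ∪ Gₘ. -/
/-!
By induction on the derivation, `Γ` is a union of *strict* bars of `α`, i.e. bars whose members
are all smaller than `α`, which rules out the trivial bars. The ground of each 0-premiss rule is
a strict bar of its conclusion; the introduction rules assemble bars of the premisses into bars
of the conclusion; an elimination rule grafts the ground of the 0-premiss rule for the
eliminated formula `φ` onto every bar containing `φ`, and grafting a strict bar onto a strict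
bar yields a strict bar; Amalgamation is closure under unions.
-/

inductive Formula : Type
  | atom : ℕ → Formula
  | bot : Formula
  | and : Formula → Formula → Formula
  | or : Formula → Formula → Formula
  | neg : Formula → Formula
  deriving DecidableEq

namespace Formula

/-- The grounding calculus `G`, parameterised by whether the `∗` rules for
disjunction (and negated conjunction) are present (`star`) and whether the
Amalgamation rule is present (`am`).  Grounds are finite sets of formulas,
so set contraction is implicit. -/
inductive Proves (star am : Bool) : Finset Formula → Formula → Prop
  -- 0-premiss rules
  | andI0 (α β : Formula) : Proves star am {α, β} (α.and β)
  | orI0l (α β : Formula) : Proves star am {α} (α.or β)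
  | orI0r (α β : Formula) : Proves star am {β} (α.or β)
  | orI0both (α β : Formula) (h : star = true) : Proves star am {α, β} (α.or β)
  | nandI0l (α β : Formula) : Proves star am {α.neg} (α.and β).neg
  | nandI0r (α β : Formula) : Proves star am {β.neg} (α.and β).neg
  | nandI0both (α β : Formula) (h : star = true) : Proves star am {α.neg, β.neg} (α.and β).neg
  | norI0 (α β : Formula) : Proves star am {α.neg, β.neg} (α.or β).neg
  | nnI0 (α : Formula) : Proves star am {α} α.neg.neg
  -- introduction rules
  | andI {Γ Δ : Finset Formula} {α β : Formula} : Proves star am Γ α → Proves star am Δ β →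
      Proves star am (Γ ∪ Δ) (α.and β)
  | orIl {Γ : Finset Formula} {α β : Formula} : Proves star am Γ α → Proves star am Γ (α.or β)
  | orIr {Γ : Finset Formula} {α β : Formula} : Proves star am Γ β → Proves star am Γ (α.or β)
  | orIboth {Γ Δ : Finset Formula} {α β : Formula} (h : star = true) : Proves star am Γ α → Proves star am Δ β →
      Proves star am (Γ ∪ Δ) (α.or β)
  | nandIl {Γ : Finset Formula} {α β : Formula} : Proves star am Γ α.neg → Proves star am Γ (α.and β).neg
  | nandIr {Γ : Finset Formula} {α β : Formula} : Proves star am Γ β.neg → Proves star am Γ (α.and β).neg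
  | nandIboth {Γ Δ : Finset Formula} {α β : Formula} (h : star = true) : Proves star am Γ α.neg → Proves star am Δ β.neg →
      Proves star am (Γ ∪ Δ) (α.and β).neg
  | norI {Γ Δ : Finset Formula} {α β : Formula} : Proves star am Γ α.neg → Proves star am Δ β.neg →
      Proves star am (Γ ∪ Δ) (α.or β).neg
  | nnI {Γ : Finset Formula} {α : Formula} : Proves star am Γ α → Proves star am Γ α.neg.neg
  -- elimination rules (replacing a member of the ground)
  | andE {Γ : Finset Formula} {β γ δ : Formula} (h : (β.and γ) ∈ Γ) : Proves star am Γ δ →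
      Proves star am (Γ.erase (β.and γ) ∪ {β, γ}) δ
  | orEl {Γ : Finset Formula} {β γ δ : Formula} (h : (β.or γ) ∈ Γ) : Proves star am Γ δ →
      Proves star am (Γ.erase (β.or γ) ∪ {β}) δ
  | orEr {Γ : Finset Formula} {β γ δ : Formula} (h : (β.or γ) ∈ Γ) : Proves star am Γ δ →
      Proves star am (Γ.erase (β.or γ) ∪ {γ}) δ
  | orEboth {Γ : Finset Formula} {β γ δ : Formula} (hs : star = true) (h : (β.or γ) ∈ Γ) : Proves star am Γ δ →
      Proves star am (Γ.erase (β.or γ) ∪ {β, γ}) δ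
  | nandEl {Γ : Finset Formula} {β γ δ : Formula} (h : (β.and γ).neg ∈ Γ) : Proves star am Γ δ →
      Proves star am (Γ.erase (β.and γ).neg ∪ {β.neg}) δ
  | nandEr {Γ : Finset Formula} {β γ δ : Formula} (h : (β.and γ).neg ∈ Γ) : Proves star am Γ δ →
      Proves star am (Γ.erase (β.and γ).neg ∪ {γ.neg}) δ
  | nandEboth {Γ : Finset Formula} {β γ δ : Formula} (hs : star = true) (h : (β.and γ).neg ∈ Γ) : Proves star am Γ δ →
      Proves star am (Γ.erase (β.and γ).neg ∪ {β.neg, γ.neg}) δ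
  | norE {Γ : Finset Formula} {β γ δ : Formula} (h : (β.or γ).neg ∈ Γ) : Proves star am Γ δ →
      Proves star am (Γ.erase (β.or γ).neg ∪ {β.neg, γ.neg}) δ
  | nnE {Γ : Finset Formula} {β δ : Formula} (h : β.neg.neg ∈ Γ) : Proves star am Γ δ →
      Proves star am (Γ.erase β.neg.neg ∪ {β}) δ
  -- Amalgamation
  | am {Γ Δ : Finset Formula} {α : Formula} (h : am = true) : Proves star am Γ α → Proves star am Δ α →
      Proves star am (Γ ∪ Δ) α

/-- The formula at a node, with `~` prefixed when the node is negative. -/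
def sgn (pos : Bool) (α : Formula) : Formula := if pos then α else α.neg

/-- `BarRel star pos α B`: `B` is (the set of signed formulas of) a bar of some
selection tree of the syntactic tree of `α`, where `α`'s root lies at polarity
`pos` (positive/negative according to the parity of `~`-nodes above it).
The trivial bar `{sgn pos α}` (containing the root) is included; feeble nodes
(positive `∨`-nodes, negative `∧`-nodes) have exactly one child kept, or
possibly both when the `∗` rules are present (`star = true`). -/
inductive BarRel (star : Bool) : Bool → Formula → Finset Formula → Prop
  | triv (pos : Bool) (α : Formula) : BarRel star pos α {sgn pos α}
  | and_pos {β γ : Formula} {B₁ B₂ : Finset Formula} : BarRel star true β B₁ → BarRel star true γ B₂ →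
      BarRel star true (β.and γ) (B₁ ∪ B₂)
  | and_neg_l {β γ : Formula} {B : Finset Formula} : BarRel star false β B → BarRel star false (β.and γ) B
  | and_neg_r {β γ : Formula} {B : Finset Formula} : BarRel star false γ B → BarRel star false (β.and γ) B
  | and_neg_both {β γ : Formula} {B₁ B₂ : Finset Formula} (h : star = true) :
      BarRel star false β B₁ → BarRel star false γ B₂ →
      BarRel star false (β.and γ) (B₁ ∪ B₂)
  | or_pos_l {β γ : Formula} {B : Finset Formula} : BarRel star true β B → BarRel star true (β.or γ) B
  | or_pos_r {β γ : Formula} {B : Finset Formula} : BarRel star true γ B → BarRel star true (β.or γ) B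
  | or_pos_both {β γ : Formula} {B₁ B₂ : Finset Formula} (h : star = true) :
      BarRel star true β B₁ → BarRel star true γ B₂ →
      BarRel star true (β.or γ) (B₁ ∪ B₂)
  | or_neg {β γ : Formula} {B₁ B₂ : Finset Formula} : BarRel star false β B₁ → BarRel star false γ B₂ →
      BarRel star false (β.or γ) (B₁ ∪ B₂)
  | neg (pos) {β : Formula} {B : Finset Formula} : BarRel star (!pos) β B → BarRel star pos β.neg B

/-- A grounding bar for `α`: a bar of a selection tree of `α` (with `~`
prefixed at negative nodes) which is non-trivial, i.e. neither contains the
root nor the (signed) only child of the root, which amounts to the bar not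
being the singleton of `α` itself. -/
def GroundingBar (star : Bool) (α : Formula) (B : Finset Formula) : Prop :=
  BarRel star true α B ∧ B ≠ {α}

/-- Subformula relation. -/
inductive Sub : Formula → Formula → Prop
  | refl (α : Formula) : Sub α α
  | and_l {α β γ : Formula} : Sub α β → Sub α (β.and γ)
  | and_r {α β γ : Formula} : Sub α γ → Sub α (β.and γ)
  | or_l {α β γ : Formula} : Sub α β → Sub α (β.or γ)
  | or_r {α β γ : Formula} : Sub α γ → Sub α (β.or γ)
  | neg {α β : Formula} : Sub α β → Sub α β.neg

/-- Proper subformula. -/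
def ProperSub (α β : Formula) : Prop := Sub α β ∧ α ≠ β

end Formula

open Formula

section SupClosure

variable {α β : Type*} [SemilatticeSup α] [SemilatticeSup β] {s s' u : Set α} {t : Set β} {a b : α}

lemma SupHom.map_mem_supClosure (f : SupHom α β) (ha : a ∈ supClosure s) (hf : Set.MapsTo f s t) :
    f a ∈ supClosure t :=
  supClosure_min (t := f ⁻¹' supClosure t) (fun _ hx ↦ subset_supClosure (hf hx))
    (supClosed_supClosure.preimage f) ha

lemma sup_mem_supClosure_of_forall_sup_mem (ha : a ∈ supClosure s) (hb : b ∈ supClosure s')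
    (h : ∀ x ∈ s, ∀ y ∈ s', x ⊔ y ∈ u) : a ⊔ b ∈ supClosure u := by
  let supPair : SupHom (α × α) α := ⟨fun p ↦ p.1 ⊔ p.2, fun _ _ ↦ sup_sup_sup_comm _ _ _ _⟩
  have hab : (a, b) ∈ supClosure (s ×ˢ s') := by rw [supClosure_prod]; exact ⟨ha, hb⟩
  exact supPair.map_mem_supClosure hab fun p hp ↦ h _ hp.1 _ hp.2

end SupClosure

namespace Finset

variable {σ : Type*} [DecidableEq σ]

def replace (b : σ) (C : Finset σ) : SupHom (Finset σ) (Finset σ) where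
  toFun B := if b ∈ B then B.erase b ∪ C else B
  map_sup' B₁ B₂ := by
    ext
    simp only [sup_eq_union]
    grind

lemma replace_of_mem {b : σ} {B : Finset σ} (C : Finset σ) (h : b ∈ B) :
    replace b C B = B.erase b ∪ C :=
  if_pos h

lemma replace_of_notMem {b : σ} {B : Finset σ} (C : Finset σ) (h : b ∉ B) :
    replace b C B = B :=
  if_neg h

lemma replace_union (b : σ) (C B₁ B₂ : Finset σ) :
    replace b C (B₁ ∪ B₂) = replace b C B₁ ∪ replace b C B₂ :=
  map_sup (replace b C) B₁ B₂

end Finset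

namespace Formula

def size : Formula → ℕ
  | atom _ => 1
  | bot => 1
  | and β γ => size β + size γ + 1
  | or β γ => size β + size γ + 1
  | neg β => size β + 1

lemma size_pos (φ : Formula) : 0 < size φ := by
  cases φ <;> simp [size]

variable {s : Bool}

lemma BarRel.size_le {p : Bool} {α b : Formula} {B : Finset Formula} (h : BarRel s p α B)
    (hb : b ∈ B) : size b ≤ size α + 1 := by
  induction h generalizing b <;> grind [size, sgn]

lemma BarRel.size_lt {p : Bool} {α β : Formula} {B : Finset Formula} (h : BarRel s p β B)
    (hβ : size β + 1 < size α) : ∀ b ∈ B, size b < size α :=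
  fun _ hb ↦ (h.size_le hb).trans_lt hβ

lemma BarRel.of_neg {ψ : Formula} {B : Finset Formula} (h : BarRel s true ψ.neg B) :
    BarRel s false ψ B := by
  cases h with
  | triv => exact .triv false ψ
  | neg _ h => exact h

lemma BarRel.of_sgn {p : Bool} {ψ : Formula} {B : Finset Formula}
    (h : BarRel s true (sgn p ψ) B) : BarRel s p ψ B := by
  cases p
  · exact h.of_neg
  · exact h

/-- The graft `C` is a bar at polarity `true` even when `b = ~ψ` sits at a negative node `ψ`:
the bars of `~ψ` are exactly those of `ψ` (`BarRel.of_sgn`). -/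
lemma BarRel.replace {p : Bool} {α b : Formula} {B C : Finset Formula} (hB : BarRel s p α B)
    (hC : BarRel s true b C) : BarRel s p α (Finset.replace b C B) := by
  induction hB with
  | triv p α =>
    by_cases h : b = sgn p α
    · subst h
      rw [Finset.replace_of_mem C (Finset.mem_singleton_self _), Finset.erase_singleton,
        Finset.empty_union]
      exact hC.of_sgn
    · rw [Finset.replace_of_notMem C (by simpa [eq_comm] using h)]
      exact .triv p α
  | and_pos _ _ ih₁ ih₂ => rw [Finset.replace_union]; exact .and_pos ih₁ ih₂
  | and_neg_l _ ih => exact .and_neg_l ih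
  | and_neg_r _ ih => exact .and_neg_r ih
  | and_neg_both hs _ _ ih₁ ih₂ => rw [Finset.replace_union]; exact .and_neg_both hs ih₁ ih₂
  | or_pos_l _ ih => exact .or_pos_l ih
  | or_pos_r _ ih => exact .or_pos_r ih
  | or_pos_both hs _ _ ih₁ ih₂ => rw [Finset.replace_union]; exact .or_pos_both hs ih₁ ih₂
  | or_neg _ _ ih₁ ih₂ => rw [Finset.replace_union]; exact .or_neg ih₁ ih₂
  | neg p _ ih => exact .neg p ih

/-- Unlike grounding bars, strict bars are preserved by grafting (`IsStrictBar.replace`), which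
makes them the invariant of the induction on derivations. -/
def IsStrictBar (s : Bool) (α : Formula) (B : Finset Formula) : Prop :=
  BarRel s true α B ∧ ∀ b ∈ B, size b < size α

section IsStrictBar

variable {α β γ b : Formula} {B B₁ B₂ C : Finset Formula}

lemma IsStrictBar.groundingBar (h : IsStrictBar s α B) : GroundingBar s α B :=
  ⟨h.1, by rintro rfl; exact (h.2 α (Finset.mem_singleton_self α)).false⟩

lemma IsStrictBar.replace (hB : IsStrictBar s α B) (hC : IsStrictBar s b C) :
    IsStrictBar s α (Finset.replace b C B) := by
  refine ⟨hB.1.replace hC.1, ?_⟩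
  by_cases hb : b ∈ B
  · rw [Finset.replace_of_mem C hb]
    intro x hx
    rcases Finset.mem_union.1 hx with hx | hx
    · exact hB.2 x (Finset.mem_of_mem_erase hx)
    · exact (hC.2 x hx).trans (hB.2 b hb)
  · rw [Finset.replace_of_notMem C hb]
    exact hB.2

lemma isStrictBar_and (h₁ : BarRel s true β B₁) (h₂ : BarRel s true γ B₂) :
    IsStrictBar s (β.and γ) (B₁ ∪ B₂) :=
  ⟨.and_pos h₁ h₂, Finset.forall_mem_union.2
    ⟨h₁.size_lt (by grind [size, size_pos]), h₂.size_lt (by grind [size, size_pos])⟩⟩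

lemma isStrictBar_or_left (h : BarRel s true β B) : IsStrictBar s (β.or γ) B :=
  ⟨.or_pos_l h, h.size_lt (by grind [size, size_pos])⟩

lemma isStrictBar_or_right (h : BarRel s true γ B) : IsStrictBar s (β.or γ) B :=
  ⟨.or_pos_r h, h.size_lt (by grind [size, size_pos])⟩

lemma isStrictBar_or_both (hs : s = true) (h₁ : BarRel s true β B₁) (h₂ : BarRel s true γ B₂) :
    IsStrictBar s (β.or γ) (B₁ ∪ B₂) :=
  ⟨.or_pos_both hs h₁ h₂, Finset.forall_mem_union.2
    ⟨h₁.size_lt (by grind [size, size_pos]), h₂.size_lt (by grind [size, size_pos])⟩⟩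

lemma isStrictBar_nand_left (h : BarRel s false β B) : IsStrictBar s (β.and γ).neg B :=
  ⟨.neg true (.and_neg_l h), h.size_lt (by grind [size, size_pos])⟩

lemma isStrictBar_nand_right (h : BarRel s false γ B) : IsStrictBar s (β.and γ).neg B :=
  ⟨.neg true (.and_neg_r h), h.size_lt (by grind [size, size_pos])⟩

lemma isStrictBar_nand_both (hs : s = true) (h₁ : BarRel s false β B₁)
    (h₂ : BarRel s false γ B₂) : IsStrictBar s (β.and γ).neg (B₁ ∪ B₂) :=
  ⟨.neg true (.and_neg_both hs h₁ h₂), Finset.forall_mem_union.2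
    ⟨h₁.size_lt (by grind [size, size_pos]), h₂.size_lt (by grind [size, size_pos])⟩⟩

lemma isStrictBar_nor (h₁ : BarRel s false β B₁) (h₂ : BarRel s false γ B₂) :
    IsStrictBar s (β.or γ).neg (B₁ ∪ B₂) :=
  ⟨.neg true (.or_neg h₁ h₂), Finset.forall_mem_union.2
    ⟨h₁.size_lt (by grind [size, size_pos]), h₂.size_lt (by grind [size, size_pos])⟩⟩

lemma isStrictBar_negNeg (h : BarRel s true β B) : IsStrictBar s β.neg.neg B :=
  ⟨.neg true (.neg false h), h.size_lt (by grind [size, size_pos])⟩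

lemma isStrictBar_and_pair : IsStrictBar s (β.and γ) {β, γ} :=
  Finset.insert_eq β {γ} ▸ isStrictBar_and (.triv true β) (.triv true γ)

lemma isStrictBar_or_pair (hs : s = true) : IsStrictBar s (β.or γ) {β, γ} :=
  Finset.insert_eq β {γ} ▸ isStrictBar_or_both hs (.triv true β) (.triv true γ)

lemma isStrictBar_nand_pair (hs : s = true) : IsStrictBar s (β.and γ).neg {β.neg, γ.neg} :=
  Finset.insert_eq β.neg {γ.neg} ▸ isStrictBar_nand_both hs (.triv false β) (.triv false γ)

lemma isStrictBar_nor_pair : IsStrictBar s (β.or γ).neg {β.neg, γ.neg} :=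
  Finset.insert_eq β.neg {γ.neg} ▸ isStrictBar_nor (.triv false β) (.triv false γ)

end IsStrictBar

lemma erase_union_mem_supClosure {δ b : Formula} {Γ C : Finset Formula}
    (hΓ : Γ ∈ supClosure {B | IsStrictBar s δ B}) (hb : b ∈ Γ) (hC : IsStrictBar s b C) :
    Γ.erase b ∪ C ∈ supClosure {B | IsStrictBar s δ B} := by
  rw [← Finset.replace_of_mem C hb]
  exact (Finset.replace b C).map_mem_supClosure hΓ fun _ hB ↦ IsStrictBar.replace hB hC

theorem Proves.mem_supClosure {am : Bool} {Γ : Finset Formula} {α : Formula}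
    (h : Proves s am Γ α) : Γ ∈ supClosure {B | IsStrictBar s α B} := by
  induction h with
  | andI0 => exact subset_supClosure isStrictBar_and_pair
  | orI0l β => exact subset_supClosure (isStrictBar_or_left (.triv true β))
  | orI0r _ γ => exact subset_supClosure (isStrictBar_or_right (.triv true γ))
  | orI0both _ _ hs => exact subset_supClosure (isStrictBar_or_pair hs)
  | nandI0l β => exact subset_supClosure (isStrictBar_nand_left (.triv false β))
  | nandI0r _ γ => exact subset_supClosure (isStrictBar_nand_right (.triv false γ))
  | nandI0both _ _ hs => exact subset_supClosure (isStrictBar_nand_pair hs)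
  | norI0 => exact subset_supClosure isStrictBar_nor_pair
  | nnI0 β => exact subset_supClosure (isStrictBar_negNeg (.triv true β))
  | andI _ _ ih₁ ih₂ =>
    exact sup_mem_supClosure_of_forall_sup_mem ih₁ ih₂ fun _ h₁ _ h₂ ↦ isStrictBar_and h₁.1 h₂.1
  | orIl _ ih => exact supClosure_mono (fun _ h ↦ isStrictBar_or_left h.1) ih
  | orIr _ ih => exact supClosure_mono (fun _ h ↦ isStrictBar_or_right h.1) ih
  | orIboth hs _ _ ih₁ ih₂ =>
    exact sup_mem_supClosure_of_forall_sup_mem ih₁ ih₂ fun _ h₁ _ h₂ ↦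
      isStrictBar_or_both hs h₁.1 h₂.1
  | nandIl _ ih => exact supClosure_mono (fun _ h ↦ isStrictBar_nand_left h.1.of_neg) ih
  | nandIr _ ih => exact supClosure_mono (fun _ h ↦ isStrictBar_nand_right h.1.of_neg) ih
  | nandIboth hs _ _ ih₁ ih₂ =>
    exact sup_mem_supClosure_of_forall_sup_mem ih₁ ih₂ fun _ h₁ _ h₂ ↦
      isStrictBar_nand_both hs h₁.1.of_neg h₂.1.of_neg
  | norI _ _ ih₁ ih₂ =>
    exact sup_mem_supClosure_of_forall_sup_mem ih₁ ih₂ fun _ h₁ _ h₂ ↦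
      isStrictBar_nor h₁.1.of_neg h₂.1.of_neg
  | nnI _ ih => exact supClosure_mono (fun _ h ↦ isStrictBar_negNeg h.1) ih
  | andE hb _ ih => exact erase_union_mem_supClosure ih hb isStrictBar_and_pair
  | orEl hb _ ih => exact erase_union_mem_supClosure ih hb (isStrictBar_or_left (.triv true _))
  | orEr hb _ ih => exact erase_union_mem_supClosure ih hb (isStrictBar_or_right (.triv true _))
  | orEboth hs hb _ ih => exact erase_union_mem_supClosure ih hb (isStrictBar_or_pair hs)
  | nandEl hb _ ih =>
    exact erase_union_mem_supClosure ih hb (isStrictBar_nand_left (.triv false _))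
  | nandEr hb _ ih =>
    exact erase_union_mem_supClosure ih hb (isStrictBar_nand_right (.triv false _))
  | nandEboth hs hb _ ih => exact erase_union_mem_supClosure ih hb (isStrictBar_nand_pair hs)
  | norE hb _ ih => exact erase_union_mem_supClosure ih hb isStrictBar_nor_pair
  | nnE hb _ ih => exact erase_union_mem_supClosure ih hb (isStrictBar_negNeg (.triv true _))
  | am _ _ _ ih₁ ih₂ => exact supClosed_supClosure ih₁ ih₂

end Formula

/-- If `Γ < α` is provable in `G` (with Amalgamation, without the `∗` rules),
then `Γ` is a union of finitely many grounding bars for `α`. -/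
theorem provable_implies_union_of_grounding_bars (Γ : Finset Formula) (α : Formula)
    (h : Proves false true Γ α) :
    ∃ 𝒢 : Finset (Finset Formula), 𝒢.Nonempty ∧
      (∀ B ∈ 𝒢, GroundingBar false α B) ∧ Γ = 𝒢.sup id := by
  -- membership in `supClosure` unfolds to being the `sup'` of a nonempty finset of generators
  obtain ⟨𝒢, h𝒢, hbars, hΓ⟩ := h.mem_supClosure
  exact ⟨𝒢, h𝒢, fun B hB ↦ (hbars hB).groundingBar, by rw [← hΓ, Finset.sup'_eq_sup]⟩
end

section
/- Amalgamation closure: the set of provable grounds of a fixed formula α in the full calculus G is closed under union, and equals the closure under binary union of the set of grounding bars for α. -/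
open Formula

/-- Closure of a family of finite sets under binary union. -/
inductive UnionClosure (S : Set (Finset Formula)) : Finset Formula → Prop
  | base {Γ} : Γ ∈ S → UnionClosure S Γ
  | union {Γ Δ} : UnionClosure S Γ → UnionClosure S Δ → UnionClosure S (Γ ∪ Δ)

/-!
A derivation in `G` assembles grounding bars: a 0-premiss rule `N < g` gives the depth-one bar `N`
of `g`, an introduction rule grafts bars of its premisses below a new root, an elimination rule
replacing `g` by `N` deepens every bar through `g`, and amalgamation takes unions. Conversely, a
nontrivial bar is derived by the 0-premiss rule at its root followed by eliminations unfolding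
each node down to the bar, and amalgamation joins bars into their unions.
-/

namespace Finset

variable {α : Type*} [DecidableEq α]

def subst (s : Finset α) (a : α) (t : Finset α) : Finset α :=
  if a ∈ s then s.erase a ∪ t else s

lemma subst_of_mem {s : Finset α} {a : α} (t : Finset α) (h : a ∈ s) :
    s.subst a t = s.erase a ∪ t :=
  if_pos h

lemma subst_of_notMem {s : Finset α} {a : α} (t : Finset α) (h : a ∉ s) : s.subst a t = s :=
  if_neg h

lemma union_subst (s₁ s₂ : Finset α) (a : α) (t : Finset α) :
    (s₁ ∪ s₂).subst a t = s₁.subst a t ∪ s₂.subst a t := by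
  unfold subst
  split_ifs <;> ext x <;> by_cases hx : x = a <;> simp_all <;> tauto

end Finset

open Finset

lemma UnionClosure.map {S T : Set (Finset Formula)} {f : Finset Formula → Finset Formula}
    (hf : ∀ B C, f (B ∪ C) = f B ∪ f C) (hST : ∀ B ∈ S, f B ∈ T) {Γ : Finset Formula}
    (h : UnionClosure S Γ) : UnionClosure T (f Γ) := by
  induction h with
  | base hB => exact .base (hST _ hB)
  | union _ _ ih₁ ih₂ => exact hf _ _ ▸ .union ih₁ ih₂

lemma UnionClosure.mono {S T : Set (Finset Formula)} {Γ : Finset Formula} (h : UnionClosure S Γ)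
    (hST : S ⊆ T) : UnionClosure T Γ :=
  h.map (f := id) (fun _ _ => rfl) hST

lemma UnionClosure.union₂ {S T U : Set (Finset Formula)} {Γ Δ : Finset Formula}
    (hΓ : UnionClosure S Γ) (hΔ : UnionClosure T Δ)
    (hSTU : ∀ B ∈ S, ∀ C ∈ T, B ∪ C ∈ U) :
    UnionClosure U (Γ ∪ Δ) := by
  induction hΓ with
  | @base B hB =>
    exact hΔ.map (f := (B ∪ ·)) (union_union_distrib_left B) (hSTU B hB)
  | union _ _ ih₁ ih₂ => exact union_union_distrib_right _ _ Δ ▸ .union ih₁ ih₂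

namespace Formula

/-- The 0-premiss rules `N < g` of `G` without `∗`; each has an elimination rule replacing `g` by
`N` inside a ground. -/
inductive BasicGround : Finset Formula → Formula → Prop
  | and (β γ : Formula) : BasicGround {β, γ} (β.and γ)
  | orl (β γ : Formula) : BasicGround {β} (β.or γ)
  | orr (β γ : Formula) : BasicGround {γ} (β.or γ)
  | nandl (β γ : Formula) : BasicGround {β.neg} (β.and γ).neg
  | nandr (β γ : Formula) : BasicGround {γ.neg} (β.and γ).neg
  | nor (β γ : Formula) : BasicGround {β.neg, γ.neg} (β.or γ).neg
  | nn (β : Formula) : BasicGround {β} β.neg.neg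

@[simp] lemma sgn_true (α : Formula) : sgn true α = α := rfl

@[simp] lemma sgn_false (α : Formula) : sgn false α = α.neg := rfl

variable {star : Bool} {pos : Bool} {γ δ g : Formula} {B C N : Finset Formula}

lemma BarRel.of_neg_s19 (h : BarRel star true γ.neg B) : BarRel star false γ B := by
  cases h with
  | triv => exact .triv false γ
  | neg _ h => exact h

lemma BarRel.of_sgn_s19 (h : BarRel star true (sgn pos γ) B) : BarRel star pos γ B := by
  cases pos
  exacts [h.of_neg_s19, h]

lemma BarRel.sizeOf_le (h : BarRel star pos γ B) {x : Formula} (hx : x ∈ B) :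
    sizeOf x ≤ sizeOf (sgn pos γ) := by
  induction h with
  | triv => simp_all
  | and_pos _ _ ih₁ ih₂ | and_neg_both _ _ _ ih₁ ih₂ | or_pos_both _ _ _ ih₁ ih₂
  | or_neg _ _ ih₁ ih₂ =>
    rcases mem_union.1 hx with hx | hx
    · have := ih₁ hx; simp_all; omega
    · have := ih₂ hx; simp_all; omega
  | neg pos _ ih =>
    cases pos
    · simp_all; omega
    · simpa using ih hx
  | _ => simp_all; omega

namespace BasicGround

lemma proves {am : Bool} (h : BasicGround N g) : Proves star am N g := by
  cases h
  exacts [.andI0 .., .orI0l .., .orI0r .., .nandI0l .., .nandI0r .., .norI0 .., .nnI0 _]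

lemma sizeOf_lt (h : BasicGround N g) {x : Formula} (hx : x ∈ N) : sizeOf x < sizeOf g := by
  cases h <;> simp at hx <;> rcases hx with rfl | rfl <;> simp <;> omega

lemma nonempty (h : BasicGround N g) : N.Nonempty := by
  cases h <;> simp

lemma barRel (h : BasicGround N g) : BarRel star true g N := by
  cases h with
  | and β γ => simpa using (BarRel.triv true β).and_pos (.triv true γ)
  | orl β γ => exact (BarRel.triv true β).or_pos_l
  | orr β γ => exact (BarRel.triv true γ).or_pos_r
  | nandl β γ => exact .neg true (BarRel.triv false β).and_neg_l
  | nandr β γ => exact .neg true (BarRel.triv false γ).and_neg_r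
  | nor β γ => exact .neg true (by simpa using (BarRel.triv false β).or_neg (.triv false γ))
  | nn β => exact .neg true (.neg false (.triv true β))

end BasicGround

lemma BarRel.subst (h : BarRel star pos γ B) (hN : BasicGround N g) :
    BarRel star pos γ (B.subst g N) := by
  induction h with
  | triv q φ =>
    by_cases hg : g = sgn q φ
    · subst hg
      simpa [subst_of_mem] using hN.barRel.of_sgn_s19
    · rw [subst_of_notMem N (by simpa [eq_comm] using hg)]
      exact .triv q φ
  | and_pos _ _ ih₁ ih₂ => rw [union_subst]; exact ih₁.and_pos ih₂
  | and_neg_l _ ih => exact ih.and_neg_l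
  | and_neg_r _ ih => exact ih.and_neg_r
  | and_neg_both h _ _ ih₁ ih₂ => rw [union_subst]; exact ih₁.and_neg_both h ih₂
  | or_pos_l _ ih => exact ih.or_pos_l
  | or_pos_r _ ih => exact ih.or_pos_r
  | or_pos_both h _ _ ih₁ ih₂ => rw [union_subst]; exact ih₁.or_pos_both h ih₂
  | or_neg _ _ ih₁ ih₂ => rw [union_subst]; exact ih₁.or_neg ih₂
  | neg pos _ ih => exact .neg pos ih

def Refines (star : Bool) (N B : Finset Formula) : Prop :=
  ∀ E δ, Proves star true (E ∪ N) δ → Proves star true (E ∪ B) δ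

namespace Refines

variable {N₁ N₂ B₁ B₂ : Finset Formula}

lemma refl : Refines star N N := fun _ _ => id

lemma trans (h₁ : Refines star N B) (h₂ : Refines star B C) : Refines star N C :=
  fun E δ h => h₂ E δ (h₁ E δ h)

lemma union (h₁ : Refines star N₁ B₁) (h₂ : Refines star N₂ B₂) :
    Refines star (N₁ ∪ N₂) (B₁ ∪ B₂) := by
  intro E δ h
  rw [← union_assoc, union_right_comm] at h
  have h' := h₁ _ δ h
  rw [union_right_comm] at h'
  simpa only [union_assoc] using h₂ _ δ h'

lemma proves (h : Refines star N B) (hN : Proves star true N δ) : Proves star true B δ := by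
  simpa using h ∅ δ (by simpa using hN)

/-- If `g ∈ E`, the elimination rule also deletes the copy of `g` belonging to `E`; amalgamating
with the original ground restores it. -/
lemma of_erase (h : ∀ Γ δ, g ∈ Γ → Proves star true Γ δ →
    Proves star true (Γ.erase g ∪ N) δ) :
    Refines star {g} N := by
  intro E δ hE
  by_cases hg : g ∈ E
  · rw [union_singleton, insert_eq_of_mem hg] at hE
    have := Proves.am rfl hE (h E δ hg hE)
    rwa [← union_assoc, union_eq_left.2 (erase_subset g E)] at this
  · simpa [union_singleton, erase_insert hg] using h _ δ (by simp) hE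

end Refines

lemma BasicGround.refines (h : BasicGround N g) : Refines star {g} N := by
  apply Refines.of_erase
  intro Γ δ hg hΓ
  cases h
  exacts [hΓ.andE hg, hΓ.orEl hg, hΓ.orEr hg, hΓ.nandEl hg, hΓ.nandEr hg, hΓ.norE hg,
    hΓ.nnE hg]

lemma BarRel.refines (h : BarRel false pos γ B) : Refines false {sgn pos γ} B := by
  induction h with
  | triv => exact .refl
  | and_pos _ _ ih₁ ih₂ => exact (BasicGround.and _ _).refines.trans (ih₁.union ih₂)
  | and_neg_l _ ih => exact (BasicGround.nandl _ _).refines.trans ih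
  | and_neg_r _ ih => exact (BasicGround.nandr _ _).refines.trans ih
  | or_pos_l _ ih => exact (BasicGround.orl _ _).refines.trans ih
  | or_pos_r _ ih => exact (BasicGround.orr _ _).refines.trans ih
  | or_neg _ _ ih₁ ih₂ => exact (BasicGround.nor _ _).refines.trans (ih₁.union ih₂)
  | neg pos _ ih =>
    cases pos
    exacts [(BasicGround.nn _).refines.trans ih, ih]
  | and_neg_both h | or_pos_both h => cases h

lemma BarRel.exists_basicGround (h : BarRel false pos γ B) (hB : B ≠ {sgn pos γ}) :
    ∃ N, BasicGround N (sgn pos γ) ∧ Refines false N B := by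
  induction h with
  | triv => exact absurd rfl hB
  | and_pos h₁ h₂ => exact ⟨_, .and _ _, h₁.refines.union h₂.refines⟩
  | and_neg_l h => exact ⟨_, .nandl _ _, h.refines⟩
  | and_neg_r h => exact ⟨_, .nandr _ _, h.refines⟩
  | or_pos_l h => exact ⟨_, .orl _ _, h.refines⟩
  | or_pos_r h => exact ⟨_, .orr _ _, h.refines⟩
  | or_neg h₁ h₂ => exact ⟨_, .nor _ _, h₁.refines.union h₂.refines⟩
  | neg pos h ih =>
    cases pos
    exacts [⟨_, .nn _, h.refines⟩, ih hB]
  | and_neg_both h | or_pos_both h => cases h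

lemma GroundingBar.proves (h : GroundingBar false δ B) : Proves false true B δ :=
  let ⟨_, hN, hNB⟩ := h.1.exists_basicGround h.2
  hNB.proves hN.proves

lemma BarRel.groundingBar (h : BarRel star true δ B) (hB : ∀ x ∈ B, sizeOf x < sizeOf δ) :
    GroundingBar star δ B :=
  ⟨h, fun e => (hB δ (e ▸ mem_singleton_self δ)).false⟩

namespace GroundingBar

lemma sizeOf_le (h : GroundingBar star δ B) {x : Formula} (hx : x ∈ B) :
    sizeOf x ≤ sizeOf δ :=
  h.1.sizeOf_le hx

lemma lift (h : GroundingBar star γ B) (hB : BarRel star true δ B) (hγ : sizeOf γ < sizeOf δ) :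
    GroundingBar star δ B :=
  hB.groundingBar fun _ hx => (h.sizeOf_le hx).trans_lt hγ

lemma union {β : Formula} (hB : GroundingBar star β B) (hC : GroundingBar star γ C)
    (h : BarRel star true δ (B ∪ C)) (hβ : sizeOf β < sizeOf δ)
    (hγ : sizeOf γ < sizeOf δ) :
    GroundingBar star δ (B ∪ C) := by
  refine h.groundingBar fun x hx => ?_
  rcases mem_union.1 hx with hx | hx
  exacts [(hB.sizeOf_le hx).trans_lt hβ, (hC.sizeOf_le hx).trans_lt hγ]

lemma subst (h : GroundingBar star δ B) (hN : BasicGround N g) :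
    GroundingBar star δ (B.subst g N) := by
  refine ⟨h.1.subst hN, ?_⟩
  by_cases hg : g ∈ B
  · rw [subst_of_mem N hg]
    intro e
    obtain ⟨n, hn⟩ := hN.nonempty
    have hnδ : n = δ := by simpa [e] using mem_union_right (B.erase g) hn
    subst hnδ
    exact (hN.sizeOf_lt hn).not_ge (h.sizeOf_le hg)
  · rw [subst_of_notMem N hg]
    exact h.2

end GroundingBar

lemma BasicGround.groundingBar (h : BasicGround N g) : GroundingBar star g N :=
  h.barRel.groundingBar fun _ => h.sizeOf_lt

lemma UnionClosure.groundingBar_erase_union {Γ : Finset Formula}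
    (hΓ : UnionClosure {B | GroundingBar star δ B} Γ) (hN : BasicGround N g) (hg : g ∈ Γ) :
    UnionClosure {B | GroundingBar star δ B} (Γ.erase g ∪ N) := by
  rw [← subst_of_mem N hg]
  exact hΓ.map (f := (·.subst g N)) (union_subst · · g N) fun _ hB => hB.subst hN

lemma Proves.unionClosure_groundingBar {Γ : Finset Formula} (h : Proves false true Γ δ) :
    UnionClosure {B | GroundingBar false δ B} Γ := by
  induction h with
  | andI0 β γ => exact .base (BasicGround.and β γ).groundingBar
  | orI0l β γ => exact .base (BasicGround.orl β γ).groundingBar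
  | orI0r β γ => exact .base (BasicGround.orr β γ).groundingBar
  | nandI0l β γ => exact .base (BasicGround.nandl β γ).groundingBar
  | nandI0r β γ => exact .base (BasicGround.nandr β γ).groundingBar
  | norI0 β γ => exact .base (BasicGround.nor β γ).groundingBar
  | nnI0 β => exact .base (BasicGround.nn β).groundingBar
  | andI _ _ ih₁ ih₂ =>
    exact ih₁.union₂ ih₂ fun B hB C hC =>
      GroundingBar.union hB hC (hB.1.and_pos hC.1) (by simp +arith) (by simp +arith)
  | orIl _ ih => exact ih.mono fun B hB => hB.lift hB.1.or_pos_l (by simp +arith)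
  | orIr _ ih => exact ih.mono fun B hB => hB.lift hB.1.or_pos_r (by simp +arith)
  | nandIl _ ih =>
    exact ih.mono fun B hB => hB.lift (.neg true hB.1.of_neg_s19.and_neg_l) (by simp +arith)
  | nandIr _ ih =>
    exact ih.mono fun B hB => hB.lift (.neg true hB.1.of_neg_s19.and_neg_r) (by simp +arith)
  | norI _ _ ih₁ ih₂ =>
    exact ih₁.union₂ ih₂ fun B hB C hC =>
      GroundingBar.union hB hC (.neg true (hB.1.of_neg_s19.or_neg hC.1.of_neg_s19)) (by simp +arith)
        (by simp +arith)
  | nnI _ ih => exact ih.mono fun B hB => hB.lift (.neg true (.neg false hB.1)) (by simp +arith)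
  | andE hg _ ih => exact ih.groundingBar_erase_union (.and _ _) hg
  | orEl hg _ ih => exact ih.groundingBar_erase_union (.orl _ _) hg
  | orEr hg _ ih => exact ih.groundingBar_erase_union (.orr _ _) hg
  | nandEl hg _ ih => exact ih.groundingBar_erase_union (.nandl _ _) hg
  | nandEr hg _ ih => exact ih.groundingBar_erase_union (.nandr _ _) hg
  | norE hg _ ih => exact ih.groundingBar_erase_union (.nor _ _) hg
  | nnE hg _ ih => exact ih.groundingBar_erase_union (.nn _) hg
  | am _ _ _ ih₁ ih₂ => exact .union ih₁ ih₂
  | orI0both _ _ h | nandI0both _ _ h | orIboth h | nandIboth h | orEboth h | nandEboth h => cases h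

end Formula

/-- Amalgamation closure: the provable grounds of `α` in the full calculus
`G` are closed under union, and coincide with the closure under binary union
of the grounding bars for `α`. -/
theorem amalgamation_closure (α : Formula) :
    (∀ Γ Δ : Finset Formula, Proves false true Γ α → Proves false true Δ α →
      Proves false true (Γ ∪ Δ) α) ∧
    (∀ Γ : Finset Formula, Proves false true Γ α ↔
      UnionClosure {B : Finset Formula | GroundingBar false α B} Γ) := by
  refine ⟨fun _ _ => Proves.am rfl, fun _ => ⟨Proves.unionClosure_groundingBar, ?_⟩⟩
  intro h
  induction h with
  | base hB => exact GroundingBar.proves hB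
  | union _ _ ih₁ ih₂ => exact Proves.am rfl ih₁ ih₂
end
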